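/- In a finite switching state-space model, the backward mode-sampling weights satisfy: for 1 ≤ t ≤ T−1, for any mode n ∈ M, given a fixed next-stage mode m ∈ M and state x⁺ ∈ S, P(M_t = n | M_{t+1} = m, X_{t+1} = x⁺, Y_{1:t} = y_{1:t}) is proportional (with proportionality constant independent of n) to μ_t^n · π(n, m) · Σ_{x∈S} q(x⁺ | x, n, m) · P(X_t = x | M_t = n, Y_{1:t} = y_{1:t}), where μ_t^n := P(M_t = n | Y_{1:t} = y_{1:t}), provided the relevant conditioning events have positive probability. -/

import Mathlib

/-!
Summing out everything after time `t + 1` leaves the model on the horizon `t + 1`, since every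
transition kernel sums to one; there the last step contributes the factor `π(n, m) q(x⁺ | xₜ, n, m)`,
and splitting according to the value `xₜ` of `Xₜ` gives
`P(Mₜ = n, M₍ₜ₊₁₎ = m, X₍ₜ₊₁₎ = x⁺, Y_{1:t}) = π(n, m) ∑ₓ q(x⁺ | x, n, m) P(Xₜ = x, Mₜ = n, Y_{1:t})`.
Dividing by `P(M₍ₜ₊₁₎ = m, X₍ₜ₊₁₎ = x⁺, Y_{1:t})` gives the claim with
`c = P(Y_{1:t}) / P(M₍ₜ₊₁₎ = m, X₍ₜ₊₁₎ = x⁺, Y_{1:t})`, which is positive because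
`P(Y_{1:t}) = ∑ₙ P(Mₜ = n, Y_{1:t})`.
-/

open Finset

namespace SwitchingSSM

noncomputable section

/-- A trajectory of a switching state-space model over `T` steps: modes and hidden states
at times `0, 1, ..., T`, and observations at times `1, ..., T` (the observation at time
`i+1` is component `i`). -/
abbrev Traj (M S Y : Type) (T : ℕ) : Type :=
  (Fin (T + 1) → M) × (Fin (T + 1) → S) × (Fin T → Y)

variable {M S Y : Type} [Fintype M] [Fintype S] [Fintype Y]

/-- Joint probability of a complete trajectory of modes, states and observations:
`ρ(m₀) q₀(x₀ | m₀) ∏ₜ π(m₍ₜ₋₁₎, mₜ) q(xₜ | x₍ₜ₋₁₎, m₍ₜ₋₁₎, mₜ) g(yₜ | xₜ, mₜ)`,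
where `pim n m` is `π(n, m)`, `q0 m x` is `q₀(x | m)`, `q x' n m x` is `q(x | x', n, m)`
and `g x m y` is `g(y | x, m)`. -/
def joint (T : ℕ) (rho : M → ℝ) (pim : M → M → ℝ) (q0 : M → S → ℝ)
    (q : S → M → M → S → ℝ) (g : S → M → Y → ℝ) (ω : Traj M S Y T) : ℝ :=
  rho (ω.1 0) * q0 (ω.1 0) (ω.2.1 0) *
    ∏ i : Fin T,
      pim (ω.1 i.castSucc) (ω.1 i.succ) *
        q (ω.2.1 i.castSucc) (ω.1 i.castSucc) (ω.1 i.succ) (ω.2.1 i.succ) *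
          g (ω.2.1 i.succ) (ω.1 i.succ) (ω.2.2 i)

open Classical in
/-- Probability of an event `A` of trajectories. -/
def Pr (T : ℕ) (rho : M → ℝ) (pim : M → M → ℝ) (q0 : M → S → ℝ)
    (q : S → M → M → S → ℝ) (g : S → M → Y → ℝ) (A : Traj M S Y T → Prop) : ℝ :=
  ∑ ω : Traj M S Y T, if A ω then joint T rho pim q0 q g ω else 0

/-- Conditional probability `P(A | B)`. -/
def cPr (T : ℕ) (rho : M → ℝ) (pim : M → M → ℝ) (q0 : M → S → ℝ)
    (q : S → M → M → S → ℝ) (g : S → M → Y → ℝ) (A B : Traj M S Y T → Prop) : ℝ :=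
  Pr T rho pim q0 q g (fun ω => A ω ∧ B ω) / Pr T rho pim q0 q g B

end

section Trajectories

variable {M S Y : Type}

def truncate {u T : ℕ} (h : u ≤ T) (ω : Traj M S Y T) : Traj M S Y u :=
  (fun i => ω.1 (Fin.castLE (Nat.succ_le_succ h) i),
    fun i => ω.2.1 (Fin.castLE (Nat.succ_le_succ h) i), fun i => ω.2.2 (Fin.castLE h i))

def lastStep {T : ℕ} (ω : Traj M S Y (T + 1)) : M × S × Y :=
  (ω.1 (Fin.last _), ω.2.1 (Fin.last _), ω.2.2 (Fin.last _))

def snocEquiv (T : ℕ) : Traj M S Y T × (M × S × Y) ≃ Traj M S Y (T + 1) where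
  toFun p := (Fin.snoc p.1.1 p.2.1, Fin.snoc p.1.2.1 p.2.2.1, Fin.snoc p.1.2.2 p.2.2.2)
  invFun ω := (truncate (Nat.le_succ T) ω, lastStep ω)
  left_inv := by
    rintro ⟨⟨mv, xv, yv⟩, a, s, y⟩
    simp only [truncate, lastStep, Fin.snoc_last, Prod.mk.injEq, and_true]
    exact ⟨funext fun _ => Fin.snoc_castSucc .., funext fun _ => Fin.snoc_castSucc ..,
      funext fun _ => Fin.snoc_castSucc ..⟩
  right_inv := by
    rintro ⟨mv, xv, yv⟩
    exact Prod.ext (Fin.snoc_init_self mv) (Prod.ext (Fin.snoc_init_self xv) (Fin.snoc_init_self yv))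

/-- `π(a, a') q(x' | x, a, a') g(y' | x', a')`: the weight of a step from mode `a` and state `x`
to `z = (a', x', y')`. -/
def stepWeight (pim : M → M → ℝ) (q : S → M → M → S → ℝ) (g : S → M → Y → ℝ) (a : M) (x : S)
    (z : M × S × Y) : ℝ :=
  pim a z.1 * q x a z.1 z.2.1 * g z.2.1 z.1 z.2.2

variable {rho : M → ℝ} {pim : M → M → ℝ} {q0 : M → S → ℝ} {q : S → M → M → S → ℝ}
  {g : S → M → Y → ℝ}

theorem joint_snocEquiv {T : ℕ} (ω : Traj M S Y T) (z : M × S × Y) :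
    joint (T + 1) rho pim q0 q g (snocEquiv T (ω, z)) =
      joint T rho pim q0 q g ω * stepWeight pim q g (ω.1 (Fin.last T)) (ω.2.1 (Fin.last T)) z := by
  have h0 : ∀ {α : Type} (f : Fin (T + 1) → α) (b : α),
      (Fin.snoc f b : Fin (T + 2) → α) 0 = f 0 := fun f b => Fin.snoc_castSucc (i := 0) ..
  simp only [joint, snocEquiv, Equiv.coe_fn_mk, Fin.prod_univ_castSucc, h0, Fin.succ_castSucc,
    Fin.snoc_castSucc, Fin.snoc_last, Fin.succ_last, stepWeight]
  ring

end Trajectories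

variable {M S Y : Type} [Fintype M] [Fintype S] [Fintype Y]

section Marginals

variable {rho : M → ℝ} {pim : M → M → ℝ} {q0 : M → S → ℝ} {q : S → M → M → S → ℝ}
  {g : S → M → Y → ℝ}

theorem sum_stepWeight (hpim1 : ∀ a : M, ∑ b : M, pim a b = 1)
    (hq1 : ∀ (x' : S) (a b : M), ∑ x : S, q x' a b x = 1)
    (hg1 : ∀ (x : S) (a : M), ∑ y : Y, g x a y = 1) (a : M) (x : S) :
    ∑ z : M × S × Y, stepWeight pim q g a x z = 1 := by
  simp only [stepWeight, Fintype.sum_prod_type, ← Finset.mul_sum, hg1, mul_one, hq1, hpim1]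

open Classical in
theorem sum_stepWeight_of_mode_state (hg1 : ∀ (x : S) (a : M), ∑ y : Y, g x a y = 1)
    (a m : M) (x x' : S) :
    ∑ z : M × S × Y, (if z.1 = m ∧ z.2.1 = x' then stepWeight pim q g a x z else 0) =
      pim a m * q x a m x' := by
  simp only [stepWeight, ite_and, Fintype.sum_prod_type, sum_ite_irrel, ← mul_sum, hg1, mul_one,
    sum_const_zero, sum_ite_eq', mem_univ, if_true]

open Classical in
theorem Pr_succ {T : ℕ} (A : Traj M S Y (T + 1) → Prop) :
    Pr (T + 1) rho pim q0 q g A =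
      ∑ ω : Traj M S Y T, joint T rho pim q0 q g ω *
        ∑ z : M × S × Y, if A (snocEquiv T (ω, z)) then
          stepWeight pim q g (ω.1 (Fin.last T)) (ω.2.1 (Fin.last T)) z else 0 := by
  simp only [Pr, ← (snocEquiv T).sum_comp, Fintype.sum_prod_type, Finset.mul_sum, mul_ite,
    mul_zero, joint_snocEquiv]

open Classical in
theorem Pr_truncate_and_lastStep {T : ℕ} (B : Traj M S Y T → Prop) (C : M × S × Y → Prop)
    [DecidablePred C] :
    Pr (T + 1) rho pim q0 q g (fun ω => B (truncate (Nat.le_succ T) ω) ∧ C (lastStep ω)) =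
      ∑ ω : Traj M S Y T, if B ω then joint T rho pim q0 q g ω *
        ∑ z : M × S × Y, (if C z then
          stepWeight pim q g (ω.1 (Fin.last T)) (ω.2.1 (Fin.last T)) z else 0) else 0 := by
  rw [Pr_succ]
  refine Finset.sum_congr rfl fun ω _ => ?_
  have hsnoc : ∀ z, truncate (Nat.le_succ T) (snocEquiv T (ω, z)) = ω ∧
      lastStep (snocEquiv T (ω, z)) = z := fun z =>
    Prod.ext_iff.mp ((snocEquiv T).symm_apply_apply (ω, z))
  split_ifs with hB <;> simp [hsnoc, hB]

theorem Pr_comp_truncate (hpim1 : ∀ a : M, ∑ b : M, pim a b = 1)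
    (hq1 : ∀ (x' : S) (a b : M), ∑ x : S, q x' a b x = 1)
    (hg1 : ∀ (x : S) (a : M), ∑ y : Y, g x a y = 1) {u T : ℕ} (h : u ≤ T)
    (A : Traj M S Y u → Prop) :
    Pr T rho pim q0 q g (fun ω => A (truncate h ω)) = Pr u rho pim q0 q g A := by
  induction T, h using Nat.le_induction with
  | base => rfl
  | succ T h ih =>
    have hstep := Pr_truncate_and_lastStep (rho := rho) (q0 := q0) (pim := pim) (q := q) (g := g)
      (fun ω => A (truncate h ω)) (fun _ => True)
    simp only [and_true, if_true, sum_stepWeight hpim1 hq1 hg1, mul_one] at hstep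
    exact hstep.trans ih

open Classical in
theorem sum_mul_Pr_fiber {α : Type} [Fintype α] {T : ℕ} (X : Traj M S Y T → α) (f : α → ℝ)
    (B : Traj M S Y T → Prop) :
    ∑ a, f a * Pr T rho pim q0 q g (fun ω => X ω = a ∧ B ω) =
      ∑ ω, if B ω then f (X ω) * joint T rho pim q0 q g ω else 0 := by
  simp only [Pr, mul_sum, mul_ite, mul_zero, ite_and]
  rw [sum_comm]
  refine sum_congr rfl fun ω _ => ?_
  split_ifs <;> simp [*]

theorem Pr_eq_sum_fiber {α : Type} [Fintype α] {T : ℕ} (X : Traj M S Y T → α)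
    (B : Traj M S Y T → Prop) :
    Pr T rho pim q0 q g B = ∑ a, Pr T rho pim q0 q g (fun ω => X ω = a ∧ B ω) := by
  have hfiber := sum_mul_Pr_fiber (rho := rho) (pim := pim) (q0 := q0) (q := q) (g := g)
    X (fun _ => 1) B
  simp only [one_mul] at hfiber
  rw [hfiber, Pr]

open Classical in
theorem Pr_truncate_and_next_eq (hg1 : ∀ (x : S) (a : M), ∑ y : Y, g x a y = 1) {T : ℕ}
    {n : M} (E : Traj M S Y T → Prop) (hE : ∀ ω, E ω → ω.1 (Fin.last T) = n) (m : M) (x' : S) :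
    Pr (T + 1) rho pim q0 q g
        (fun ω => E (truncate (Nat.le_succ T) ω) ∧ (lastStep ω).1 = m ∧ (lastStep ω).2.1 = x') =
      pim n m * ∑ x : S, q x n m x' *
        Pr T rho pim q0 q g (fun ω => ω.2.1 (Fin.last T) = x ∧ E ω) := by
  calc _ = ∑ ω, if E ω then pim n m * q (ω.2.1 (Fin.last T)) n m x' *
          joint T rho pim q0 q g ω else 0 := by
        rw [Pr_truncate_and_lastStep E (fun z => z.1 = m ∧ z.2.1 = x')]
        refine sum_congr rfl fun ω _ => if_ctx_congr Iff.rfl (fun hω => ?_) fun _ => rfl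
        rw [sum_stepWeight_of_mode_state hg1, hE ω hω, mul_comm]
    _ = ∑ x, pim n m * q x n m x' * Pr T rho pim q0 q g (fun ω => ω.2.1 (Fin.last T) = x ∧ E ω) :=
        (sum_mul_Pr_fiber _ (fun x => pim n m * q x n m x') E).symm
    _ = _ := by simp only [mul_sum, mul_assoc]

theorem Pr_mode_and_next_eq (hpim1 : ∀ a : M, ∑ b : M, pim a b = 1)
    (hq1 : ∀ (x' : S) (a b : M), ∑ x : S, q x' a b x = 1)
    (hg1 : ∀ (x : S) (a : M), ∑ y : Y, g x a y = 1) {t T : ℕ} (h : t < T)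
    (yobs : Fin T → Y) (n m : M) (xplus : S) :
    Pr T rho pim q0 q g (fun ω => ω.1 ⟨t, by omega⟩ = n ∧ ω.1 ⟨t + 1, by omega⟩ = m ∧
        ω.2.1 ⟨t + 1, by omega⟩ = xplus ∧ ∀ i : Fin T, (i : ℕ) < t → ω.2.2 i = yobs i) =
      pim n m * ∑ x : S, q x n m xplus * Pr T rho pim q0 q g (fun ω => ω.2.1 ⟨t, by omega⟩ = x ∧
        ω.1 ⟨t, by omega⟩ = n ∧ ∀ i : Fin T, (i : ℕ) < t → ω.2.2 i = yobs i) := by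
  set E : Traj M S Y t → Prop := fun ω =>
    ω.1 (Fin.last t) = n ∧ ∀ j : Fin t, ω.2.2 j = yobs (Fin.castLE h.le j)
  have hobs : ∀ ω : Traj M S Y T, (∀ i : Fin T, (i : ℕ) < t → ω.2.2 i = yobs i) ↔
      ∀ j : Fin t, (truncate h.le ω).2.2 j = yobs (Fin.castLE h.le j) :=
    fun ω => ⟨fun H j => H _ j.2, fun H i hi => H ⟨i, hi⟩⟩
  have hlhs : Pr T rho pim q0 q g (fun ω => ω.1 ⟨t, by omega⟩ = n ∧ ω.1 ⟨t + 1, by omega⟩ = m ∧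
        ω.2.1 ⟨t + 1, by omega⟩ = xplus ∧ ∀ i : Fin T, (i : ℕ) < t → ω.2.2 i = yobs i) =
      Pr (t + 1) rho pim q0 q g (fun ω =>
        E (truncate (Nat.le_succ t) ω) ∧ (lastStep ω).1 = m ∧ (lastStep ω).2.1 = xplus) := by
    rw [← Pr_comp_truncate hpim1 hq1 hg1 h]
    exact congrArg _ <| funext fun ω => propext
      ⟨fun ⟨hn, hm, hx, ho⟩ => ⟨⟨hn, (hobs ω).1 ho⟩, hm, hx⟩,
        fun ⟨⟨hn, ho⟩, hm, hx⟩ => ⟨hn, hm, hx, (hobs ω).2 ho⟩⟩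
  have hrhs : ∀ x, Pr T rho pim q0 q g (fun ω => ω.2.1 ⟨t, by omega⟩ = x ∧
      ω.1 ⟨t, by omega⟩ = n ∧ ∀ i : Fin T, (i : ℕ) < t → ω.2.2 i = yobs i) =
      Pr t rho pim q0 q g (fun ω => ω.2.1 (Fin.last t) = x ∧ E ω) := fun x => by
    rw [← Pr_comp_truncate hpim1 hq1 hg1 h.le]
    exact congrArg _ <| funext fun ω => propext (Iff.rfl.and (Iff.rfl.and (hobs ω)))
  rw [hlhs, Pr_truncate_and_next_eq hg1 E (fun _ hω => hω.1)]
  simp only [hrhs]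

end Marginals

/-- Backward mode-sampling weights of a finite switching state-space model: for a fixed
next-stage mode `m` and state `x⁺`, there is a constant `c > 0` independent of `n` with
`P(Mₜ = n | M₍ₜ₊₁₎ = m, X₍ₜ₊₁₎ = x⁺, Y_{1:t} = y_{1:t})
  = c ⬝ μₜⁿ π(n, m) ∑ₓ q(x⁺ | x, n, m) P(Xₜ = x | Mₜ = n, Y_{1:t} = y_{1:t})`,
where `μₜⁿ = P(Mₜ = n | Y_{1:t} = y_{1:t})`, provided the relevant conditioning events have
positive probability.  Here `yobs i` denotes the observation `y_{i+1}`. -/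
theorem backward_mode_sampling_weights
    (T : ℕ) (rho : M → ℝ) (pim : M → M → ℝ) (q0 : M → S → ℝ)
    (q : S → M → M → S → ℝ) (g : S → M → Y → ℝ)
    (hpim1 : ∀ a : M, (∑ b : M, pim a b) = 1)
    (hq1 : ∀ (x' : S) (a b : M), (∑ x : S, q x' a b x) = 1)
    (hg1 : ∀ (x : S) (a : M), (∑ y : Y, g x a y) = 1)
    (yobs : Fin T → Y) (t : ℕ) (ht1 : 1 ≤ t) (ht2 : t ≤ T - 1)
    (m : M) (xplus : S)
    (hpos : 0 < Pr T rho pim q0 q g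
      (fun ω => ω.1 ⟨t + 1, by omega⟩ = m ∧ ω.2.1 ⟨t + 1, by omega⟩ = xplus ∧
        ∀ i : Fin T, (i : ℕ) < t → ω.2.2 i = yobs i))
    (hpos' : ∀ n : M, 0 < Pr T rho pim q0 q g
      (fun ω => ω.1 ⟨t, by omega⟩ = n ∧
        ∀ i : Fin T, (i : ℕ) < t → ω.2.2 i = yobs i)) :
    ∃ c : ℝ, 0 < c ∧ ∀ n : M,
      cPr T rho pim q0 q g (fun ω => ω.1 ⟨t, by omega⟩ = n)
          (fun ω => ω.1 ⟨t + 1, by omega⟩ = m ∧ ω.2.1 ⟨t + 1, by omega⟩ = xplus ∧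
            ∀ i : Fin T, (i : ℕ) < t → ω.2.2 i = yobs i) =
        c *
          (cPr T rho pim q0 q g (fun ω => ω.1 ⟨t, by omega⟩ = n)
              (fun ω => ∀ i : Fin T, (i : ℕ) < t → ω.2.2 i = yobs i) *
            pim n m *
            ∑ x : S, q x n m xplus *
              cPr T rho pim q0 q g (fun ω => ω.2.1 ⟨t, by omega⟩ = x)
                (fun ω => ω.1 ⟨t, by omega⟩ = n ∧
                  ∀ i : Fin T, (i : ℕ) < t → ω.2.2 i = yobs i)) := by
  have ht : t < T := by omega
  have hobs : 0 < Pr T rho pim q0 q g (fun ω => ∀ i : Fin T, (i : ℕ) < t → ω.2.2 i = yobs i) := by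
    rw [Pr_eq_sum_fiber (fun ω => ω.1 ⟨t, by omega⟩)]
    exact sum_pos (fun n _ => hpos' n) ⟨m, mem_univ m⟩
  refine ⟨_ / _, div_pos hobs hpos, fun n => ?_⟩
  have hmode := (hpos' n).ne'
  simp only [cPr, Pr_mode_and_next_eq hpim1 hq1 hg1 ht, mul_div_assoc', ← sum_div]
  field_simp

end SwitchingSSM
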